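/- (Normal-form proofs are closed under symmetry and transitivity.) For all closed λ-terms M, N, P: if NF(M,N) then NF(N,M); and if NF(M,N) and NF(N,P) then NF(M,P). -/

import Mathlib

/-- Untyped λ-terms in de Bruijn representation. -/
inductive Lam : Type
  | var : ℕ → Lam
  | app : Lam → Lam → Lam
  | lam : Lam → Lam
deriving DecidableEq

namespace Lam

/-- Lift (shift) the free variables ≥ d by one. -/
def lift : ℕ → Lam → Lam
  | d, var n => if n < d then var n else var (n + 1)
  | d, app M N => app (lift d M) (lift d N)
  | d, lam M => lam (lift (d + 1) M)

/-- Capture-avoiding substitution of N for the free variable k. -/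
def subst : ℕ → Lam → Lam → Lam
  | k, N, var n => if n = k then N else if k < n then var (n - 1) else var n
  | k, N, app A B => app (subst k N A) (subst k N B)
  | k, N, lam M => lam (subst (k + 1) (lift 0 N) M)

/-- All free variables are < k. -/
def ClosedUnder : ℕ → Lam → Prop
  | k, var n => n < k
  | k, app A B => ClosedUnder k A ∧ ClosedUnder k B
  | k, lam M => ClosedUnder (k + 1) M

/-- A term is closed if it has no free variables. -/
def Closed (M : Lam) : Prop := ClosedUnder 0 M

/-- x occurs free in the term. -/
def FreeIn : ℕ → Lam → Prop
  | x, var n => n = x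
  | x, app A B => FreeIn x A ∨ FreeIn x B
  | x, lam M => FreeIn (x + 1) M

/-- The minimal number of abstractions needed to close the term. -/
def fvBound : Lam → ℕ
  | var n => n + 1
  | app A B => max (fvBound A) (fvBound B)
  | lam M => fvBound M - 1

/-- Iterated abstraction λz₁…zₙ.M. -/
def absN : ℕ → Lam → Lam
  | 0, M => M
  | n + 1, M => lam (absN n M)

/-- The λ-closure of a term: abstraction over all its free variables. -/
def close (M : Lam) : Lam := absN (fvBound M) M

/-- One-step β-reduction (closed under arbitrary contexts). -/
inductive Beta : Lam → Lam → Prop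
  | beta (U V) : Beta (app (lam U) V) (subst 0 V U)
  | appL {M M'} (N) : Beta M M' → Beta (app M N) (app M' N)
  | appR (M) {N N'} : Beta N N' → Beta (app M N) (app M N')
  | lam {M M'} : Beta M M' → Beta (lam M) (lam M')

/-- Many-step β-reduction. -/
def BetaStar : Lam → Lam → Prop := Relation.ReflTransGen Beta

/-- β-conversion. -/
def BetaConv : Lam → Lam → Prop := Relation.EqvGen Beta

def iComb : Lam := lam (var 0)
def omegaComb : Lam := lam (app (var 0) (var 0))
def Omega : Lam := app omegaComb omegaComb
def Kstar : Lam := lam (lam (var 0))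

/-- Apply a term to a list of arguments: M N₁ ⋯ Nₖ. -/
def appList : Lam → List Lam → Lam
  | M, [] => M
  | M, N :: Ns => appList (app M N) Ns

/-- A term is solvable iff its λ-closure applied to some closed terms β-converts to I. -/
def Solvable (M : Lam) : Prop :=
  ∃ Ns : List Lam, (∀ N ∈ Ns, Closed N) ∧ BetaConv (appList (close M) Ns) iComb

/-- One-step weak βΩ-reduction. -/
inductive WBO : Lam → Lam → Prop
  | wbeta (U V) : Closed (app (lam U) V) → WBO (app (lam U) V) (subst 0 V U)
  | womega (M) : Closed M → ¬ Solvable M → M ≠ Omega → WBO M Omega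
  | appL {M M'} (N) : WBO M M' → WBO (app M N) (app M' N)
  | appR (M) {N N'} : WBO N N' → WBO (app M N) (app M N')
  | lam {M M'} : WBO M M' → WBO (lam M) (lam M')

/-- Many-step weak βΩ-reduction. -/
def WBOStar : Lam → Lam → Prop := Relation.ReflTransGen WBO

/-- Weak βΩ-conversion. -/
def WBOConv : Lam → Lam → Prop := Relation.EqvGen WBO

/-- One-step full βΩ-reduction (Ω-contraction allowed on open terms,
unsolvability referring to the λ-closure). -/
inductive BO : Lam → Lam → Prop
  | beta (U V) : BO (app (lam U) V) (subst 0 V U)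
  | omega (M) : ¬ Solvable M → M ≠ Omega → BO M Omega
  | appL {M M'} (N) : BO M M' → BO (app M N) (app M' N)
  | appR (M) {N N'} : BO N N' → BO (app M N) (app M N')
  | lam {M M'} : BO M M' → BO (lam M) (lam M')

/-- Many-step full βΩ-reduction. -/
def BOStar : Lam → Lam → Prop := Relation.ReflTransGen BO

/-- Full βΩ-conversion. -/
def BOConv : Lam → Lam → Prop := Relation.EqvGen BO

/-- A term is in βΩ-normal form iff it admits no βΩ-reduction, i.e. it contains
no β-redex and no unsolvable subterm other than Ω. -/
def BONormal (M : Lam) : Prop := ∀ N, ¬ BO M N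

/-- Head weak β-reduction: contraction of the head redex
λx₁…xₙ.(λx.U)V M₁⋯Mₖ → λx₁…xₙ.([V/x]U)M₁⋯Mₖ with (λx.U)V closed. -/
inductive HeadWBeta : Lam → Lam → Prop
  | head (U V) : Closed (app (lam U) V) → HeadWBeta (app (lam U) V) (subst 0 V U)
  | app {M M'} (N) : (∀ U, M ≠ lam U) → HeadWBeta M M' → HeadWBeta (app M N) (app M' N)
  | lam {M M'} : HeadWBeta M M' → HeadWBeta (lam M) (lam M')

/-- The head variable of the term is the free variable x,
i.e. the term has the form λy₁…yᵣ. x X₁ ⋯ Xₘ. -/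
inductive HeadVar : ℕ → Lam → Prop
  | var (x) : HeadVar x (var x)
  | app {x M} (N) : (∀ U, M ≠ lam U) → HeadVar x M → HeadVar x (app M N)
  | lam {x M} : HeadVar (x + 1) M → HeadVar x (lam M)

/-- Subterm relation. -/
inductive Subterm : Lam → Lam → Prop
  | refl (M) : Subterm M M
  | appL {S M} (N) : Subterm S M → Subterm S (app M N)
  | appR (M) {S N} : Subterm S N → Subterm S (app M N)
  | lam {S M} : Subterm S M → Subterm S (lam M)

/-- A closed term is in weak βΩ head normal form iff it is unsolvable and equal
to Ω, or solvable and without a head weak β-redex. -/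
def WHnf (M : Lam) : Prop :=
  (¬ Solvable M ∧ M = Omega) ∨ (Solvable M ∧ ∀ N, ¬ HeadWBeta M N)

/-- Equality in the theory Hω. -/
inductive HOmega : Lam → Lam → Prop
  | refl (M) : Closed M → HOmega M M
  | wbetaL (U N) : Closed (app (lam U) N) → HOmega (app (lam U) N) (subst 0 N U)
  | wbetaR (U N) : Closed (app (lam U) N) → HOmega (subst 0 N U) (app (lam U) N)
  | unsolvL (M) : Closed M → ¬ Solvable M → HOmega M Omega
  | unsolvR (M) : Closed M → ¬ Solvable M → HOmega Omega M
  | leibnitz (X Y M N) : ClosedUnder 1 X → ClosedUnder 1 Y → Closed M → Closed N →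
      HOmega (subst 0 M X) (subst 0 M Y) → HOmega M N →
      HOmega (subst 0 N X) (subst 0 N Y)
  | omega_rule (P Q) : Closed P → Closed Q →
      (∀ M, Closed M → HOmega (app P M) (app Q M)) → HOmega P Q

/-- The n-fold application fⁿ z in the Church numeral. -/
def churchBody : ℕ → Lam
  | 0 => var 0
  | n + 1 => app (var 1) (churchBody n)

/-- The n-th Church numeral. -/
def church (n : ℕ) : Lam := lam (lam (churchBody n))


/-- NFₜ(M,N): M =ω N is provable by a proof whose endpiece is in normal form with
a chain of length t.  (The witnessing function `f` skolemizes the existential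
"for every closed L there is some t' with NF_{t'}(P L, Q L)" in the clause OM(P,Q).) -/
inductive NF : ℕ → Lam → Lam → Prop
  | base (M N) : Closed M → Closed N → WBOConv M N → NF 0 M N
  | step (t M N M₁ P₁ Q₁) : Closed M → Closed N → Closed M₁ → Closed P₁ → Closed Q₁ →
      WBOConv M (app M₁ P₁) →
      (f : Lam → ℕ) →
      (∀ L, Closed L → NF (f L) (app P₁ L) (app Q₁ L)) →
      NF t (app M₁ Q₁) N → NF (t + 1) M N

/-! An NF-proof of `M = N` is a chain of weak βΩ-conversions and ω-rule links
from `Mᵢ Pᵢ` to `Mᵢ Qᵢ`. Chains concatenate, which gives transitivity; reversing a chain, with the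
premises `Pᵢ L = Qᵢ L` of each link reversed recursively, gives symmetry. Reversal keeps
the length of every chain, so the same index function witnesses the reversed links. -/

theorem NF.closed {t : ℕ} {M N : Lam} (h : NF t M N) : Closed M ∧ Closed N := by
  cases h with
  | base _ _ hM hN _ => exact ⟨hM, hN⟩
  | step _ _ _ _ _ _ hM hN => exact ⟨hM, hN⟩

theorem NF.wboConv_trans {t : ℕ} {M N P : Lam} (hM : Closed M) (hMN : WBOConv M N)
    (h : NF t N P) : NF t M P := by
  cases h with
  | base _ _ _ hP hNP => exact NF.base M P hM hP (hMN.trans _ _ _ hNP)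
  | step t _ _ M₁ P₁ Q₁ _ hP hM₁ hP₁ hQ₁ hN f hf hrest =>
      exact NF.step t M P M₁ P₁ Q₁ hM hP hM₁ hP₁ hQ₁ (hMN.trans _ _ _ hN) f hf hrest

theorem NF.trans {t s : ℕ} {M N P : Lam} (h : NF t M N) (h' : NF s N P) :
    NF (t + s) M P := by
  induction h with
  | base M N hM _ hMN => simpa using h'.wboConv_trans hM hMN
  | step t M N M₁ P₁ Q₁ hM _ hM₁ hP₁ hQ₁ hconv f hf _ _ ih =>
      rw [Nat.add_right_comm]
      exact NF.step _ M P M₁ P₁ Q₁ hM h'.closed.2 hM₁ hP₁ hQ₁ hconv f hf (ih h')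

theorem NF.single {M₁ P₁ Q₁ N : Lam} {f : Lam → ℕ} (hM₁ : Closed M₁) (hP₁ : Closed P₁)
    (hQ₁ : Closed Q₁) (hN : Closed N)
    (hf : ∀ L, Closed L → NF (f L) (app P₁ L) (app Q₁ L)) (hconv : WBOConv (app M₁ Q₁) N) :
    NF 1 (app M₁ P₁) N :=
  NF.step 0 _ N M₁ P₁ Q₁ ⟨hM₁, hP₁⟩ hN hM₁ hP₁ hQ₁ (Relation.EqvGen.refl _) f hf
    (NF.base _ N ⟨hM₁, hQ₁⟩ hN hconv)

theorem NF.symm {t : ℕ} {M N : Lam} (h : NF t M N) : NF t N M := by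
  induction h with
  | base M N hM hN hMN => exact NF.base N M hN hM (hMN.symm _ _)
  | step t M N M₁ P₁ Q₁ hM _ hM₁ hP₁ hQ₁ hconv f _ _ hf_symm ih =>
      exact ih.trans (NF.single hM₁ hQ₁ hP₁ hM hf_symm (hconv.symm _ _))

/-- Normal-form proofs are closed under symmetry and transitivity. -/
theorem nf_symm_trans :
    (∀ M N : Lam, Closed M → Closed N → (∃ t, NF t M N) → ∃ t, NF t N M) ∧
    (∀ M N P : Lam, Closed M → Closed N → Closed P →
      (∃ t, NF t M N) → (∃ t, NF t N P) → ∃ t, NF t M P) :=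
  ⟨fun _ _ _ _ ⟨t, h⟩ => ⟨t, h.symm⟩,
    fun _ _ _ _ _ _ ⟨t, h⟩ ⟨s, h'⟩ => ⟨t + s, h.trans h'⟩⟩

end Lam
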